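/- Let H be the simple graph on vertex set {0,1,2} × {0,1,2} in which (u,v) and (x,y) are adjacent if and only if u ≠ x and v ≠ y. Then H has at least 6 distinct 2-dominating independent sets; in particular, m(2,6) ≤ 9. -/

import Mathlib

/-! The three rows and three columns of the grid `Fin 3 × Fin 3` are 2-dominating independent
sets of `K₃ × K₃`: a row is independent because adjacent vertices differ in the first
coordinate, and a vertex off the row is adjacent to exactly the two points of the row that
differ from it in the second coordinate (symmetrically for columns). Relabelling the vertices
by `Fin 9` is a graph isomorphism, and isomorphisms preserve the number of k-DISes. -/

open SimpleGraph

/-- `D` is a `k`-dominating independent set of `G`: `D` is independent and every vertex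
outside `D` has at least `k` neighbours in `D`. -/
def IsKDIS {V : Type*} [Fintype V] (G : SimpleGraph V) (k : ℕ) (D : Finset V) : Prop :=
  (∀ x ∈ D, ∀ y ∈ D, ¬ G.Adj x y) ∧
  ∀ v : V, v ∉ D → k ≤ (G.neighborSet v ∩ (D : Set V)).ncard

/-- The number of `k`-dominating independent sets of `G`. -/
noncomputable def numKDIS {V : Type*} [Fintype V] (G : SimpleGraph V) (k : ℕ) : ℕ :=
  Nat.card {D : Finset V // IsKDIS G k D}

/-- `mi k n`: the maximum number of `k`-dominating independent sets in a simple graph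
on `n` vertices. -/
noncomputable def mi (k n : ℕ) : ℕ :=
  sSup {m : ℕ | ∃ G : SimpleGraph (Fin n), numKDIS G k = m}

/-- `mDIS k t`: the smallest `n` such that some simple graph on `n` vertices has at least
`t` `k`-dominating independent sets. -/
noncomputable def mDIS (k t : ℕ) : ℕ :=
  sInf {n : ℕ | ∃ G : SimpleGraph (Fin n), t ≤ numKDIS G k}

/-- The graph `K_3 × K_3` on `Fin 3 × Fin 3`: `(u,v)` and `(x,y)` adjacent iff
`u ≠ x` and `v ≠ y`. -/
def K3timesK3 : SimpleGraph (Fin 3 × Fin 3) where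
  Adj p q := p.1 ≠ q.1 ∧ p.2 ≠ q.2
  symm := by
    constructor
    intro p q h
    exact ⟨h.1.symm, h.2.symm⟩
  loopless := by
    constructor
    intro p h
    exact h.1 rfl

instance : DecidableRel K3timesK3.Adj :=
  fun p q => inferInstanceAs (Decidable (p.1 ≠ q.1 ∧ p.2 ≠ q.2))

section KDIS

variable {V W : Type*} [Fintype V] [Fintype W] {G : SimpleGraph V} {k : ℕ}

lemma isKDIS_iff_le_card_neighborFinset_inter [DecidableEq V] [DecidableRel G.Adj]
    (D : Finset V) :
    IsKDIS G k D ↔ (∀ x ∈ D, ∀ y ∈ D, ¬ G.Adj x y) ∧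
      ∀ v : V, v ∉ D → k ≤ (G.neighborFinset v ∩ D).card := by
  have hcard : ∀ v, (G.neighborSet v ∩ (D : Set V)).ncard = (G.neighborFinset v ∩ D).card := by
    intro v
    rw [← Set.ncard_coe_finset, Finset.coe_inter, coe_neighborFinset]
  simp only [IsKDIS, hcard]

instance [DecidableEq V] [DecidableRel G.Adj] : DecidablePred (IsKDIS G k) := fun D =>
  decidable_of_iff' _ (isKDIS_iff_le_card_neighborFinset_inter D)

lemma IsKDIS.map_iso {G' : SimpleGraph W} (e : G ≃g G') {D : Finset V} (hD : IsKDIS G k D) :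
    IsKDIS G' k (D.map e.toEquiv.toEmbedding) := by
  obtain ⟨hindep, hdom⟩ := hD
  refine ⟨?_, fun v hv => ?_⟩
  · simp only [Finset.mem_map]
    rintro _ ⟨x, hx, rfl⟩ _ ⟨y, hy, rfl⟩
    simpa [e.map_adj_iff] using hindep x hx y hy
  · obtain ⟨u, rfl⟩ := e.surjective v
    have hu : u ∉ D := fun hu => hv (Finset.mem_map_of_mem _ hu)
    have himage : G'.neighborSet (e u) ∩ ↑(D.map e.toEquiv.toEmbedding) =
        e '' (G.neighborSet u ∩ D) := by
      ext w
      obtain ⟨w, rfl⟩ := e.surjective w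
      simp [e.map_adj_iff]
    rw [himage, Set.ncard_image_of_injective _ e.injective]
    exact hdom u hu

lemma numKDIS_le_of_iso {G' : SimpleGraph W} (e : G ≃g G') : numKDIS G k ≤ numKDIS G' k :=
  Nat.card_le_card_of_injective (fun D => ⟨D.1.map e.toEquiv.toEmbedding, D.2.map_iso e⟩)
    fun _ _ h => Subtype.ext (Finset.map_injective _ (congrArg Subtype.val h))

lemma card_le_numKDIS_of_injective {ι : Type*} {f : ι → Finset V} (hf : Function.Injective f)
    (hkdis : ∀ i, IsKDIS G k (f i)) : Nat.card ι ≤ numKDIS G k :=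
  Nat.card_le_card_of_injective (fun i => ⟨f i, hkdis i⟩)
    fun _ _ h => hf (congrArg Subtype.val h)

lemma mDIS_le_card {t : ℕ} (G : SimpleGraph V) (h : t ≤ numKDIS G k) :
    mDIS k t ≤ Fintype.card V :=
  Nat.sInf_le ⟨_, h.trans (numKDIS_le_of_iso (Iso.map (Fintype.equivFin V) G))⟩

end KDIS

namespace K3timesK3

def line : Fin 3 ⊕ Fin 3 → Finset (Fin 3 × Fin 3)
  | .inl i => {i} ×ˢ Finset.univ
  | .inr j => Finset.univ ×ˢ {j}

lemma line_injective : Function.Injective line := by decide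

lemma isKDIS_two_line (l : Fin 3 ⊕ Fin 3) : IsKDIS K3timesK3 2 (line l) := by
  revert l
  decide

end K3timesK3

theorem K3timesK3_six_2DIS : 6 ≤ numKDIS K3timesK3 2 ∧ mDIS 2 6 ≤ 9 := by
  have hsix : 6 ≤ numKDIS K3timesK3 2 := by
    simpa using card_le_numKDIS_of_injective K3timesK3.line_injective K3timesK3.isKDIS_two_line
  exact ⟨hsix, mDIS_le_card K3timesK3 hsix⟩
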